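/- Let φ: s ⊸ t₁ and ψ: s ⊸ t₂ be parallel steps in a weakly orthogonal iTRS. Then there exists an orthogonalization of the pair (φ, ψ): parallel steps φ′: s ⊸ t₁ and ψ′: s ⊸ t₂ (with the same sources and targets) contracting sets of redexes U′ and V′ such that U′ ∪ V′ is a set of pairwise non-overlapping redexes. -/

import Mathlib

/-!
Infinitary term rewriting: possibly infinite first-order terms, infinitary
term rewriting systems (iTRSs), strongly convergent transfinite reductions,
parallel steps, multi-steps (complete developments), and clusters,
following Endrullis–Grabmayer–Hendriks–Klop–van Oostrom,
"Infinitary Term Rewriting for Weakly Orthogonal Systems".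
-/

namespace WOInf

/-- Positions in terms: finite sequences of naturals (child indices, `1`-based). -/
abbrev Pos : Type := List ℕ

/-- Possibly infinite terms over the signature `(F, ar)` with variables `V`:
partial maps from positions to symbols with defined root, whose domain
respects arities (the `i`-th child of a node is defined exactly when the node
carries a function symbol `f` and `1 ≤ i ≤ ar f`); such a domain is
automatically nonempty and prefix-closed. -/
structure Term (F V : Type) (ar : F → ℕ) : Type where
  val : Pos → Option (F ⊕ V)
  root_isSome : (val []).isSome
  node : ∀ p i, (val (p ++ [i])).isSome ↔
      ∃ f, val p = some (Sum.inl f) ∧ 1 ≤ i ∧ i ≤ ar f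

/-- Finite terms (used for left-hand sides of rules). -/
inductive FTerm (F V : Type) (ar : F → ℕ) : Type
  | var : V → FTerm F V ar
  | app : (f : F) → (Fin (ar f) → FTerm F V ar) → FTerm F V ar

variable {F V : Type} {ar : F → ℕ}

/-- The symbol of a finite term at a position (child indices `1`-based). -/
def FTerm.val : FTerm F V ar → Pos → Option (F ⊕ V)
  | .var x, [] => some (Sum.inr x)
  | .app f _, [] => some (Sum.inl f)
  | .var _, _ :: _ => none
  | .app f ts, i :: p =>
      if h : 1 ≤ i ∧ i ≤ ar f then FTerm.val (ts ⟨i - 1, by omega⟩) p else none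

/-- An infinitary term rewriting system (iTRS): finitely many rules
`ℓ → r` where `ℓ` is a finite non-variable term, `r` is a possibly infinite
term, and every variable of `r` occurs in `ℓ`. -/
structure ITRS (F V : Type) (ar : F → ℕ) : Type 1 where
  /-- the (finite) index type of rules -/
  R : Type
  finR : Finite R
  /-- left-hand sides -/
  lhs : R → FTerm F V ar
  /-- right-hand sides -/
  rhs : R → Term F V ar
  lhs_not_var : ∀ ρ x, lhs ρ ≠ FTerm.var x
  var_cond : ∀ ρ x p, (rhs ρ).val p = some (Sum.inr x) →
      ∃ q, (lhs ρ).val q = some (Sum.inr x)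

/-- The subtree of `t` at position `p` is (extensionally) the term `u`. -/
def SubtreeEq (t : Term F V ar) (p : Pos) (u : Term F V ar) : Prop :=
  ∀ q, t.val (p ++ q) = u.val q

/-- The subterm of `t` at position `p` is the instance of the finite term `ℓ`
under the substitution `σ`. -/
def MatchesAt (ℓ : FTerm F V ar) (σ : V → Term F V ar)
    (t : Term F V ar) (p : Pos) : Prop :=
  (∀ q f, ℓ.val q = some (Sum.inl f) → t.val (p ++ q) = some (Sum.inl f)) ∧
  (∀ q x, ℓ.val q = some (Sum.inr x) → SubtreeEq t (p ++ q) (σ x))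

/-- The subterm of `t` at position `p` is the instance of the possibly
infinite term `r` under the substitution `σ`. -/
def InstanceAt (r : Term F V ar) (σ : V → Term F V ar)
    (t : Term F V ar) (p : Pos) : Prop :=
  (∀ q f, r.val q = some (Sum.inl f) → t.val (p ++ q) = some (Sum.inl f)) ∧
  (∀ q x, r.val q = some (Sum.inr x) → SubtreeEq t (p ++ q) (σ x))

variable (S : ITRS F V ar)

/-- A redex (occurrence): a position together with a rule. -/
structure Redex (S : ITRS F V ar) : Type where
  pos : Pos
  rule : S.R

/-- `u` is a redex occurrence in `t`. -/
def IsRedex (t : Term F V ar) (u : Redex S) : Prop :=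
  ∃ σ, MatchesAt (S.lhs u.rule) σ t u.pos

/-- `t` rewrites to `t'` by contracting the redex occurrence `u`. -/
def StepRedex (u : Redex S) (t t' : Term F V ar) : Prop :=
  ∃ σ, MatchesAt (S.lhs u.rule) σ t u.pos ∧
       InstanceAt (S.rhs u.rule) σ t' u.pos ∧
       ∀ q, ¬ u.pos <+: q → t'.val q = t.val q

/-- `t` rewrites to `t'` by a rewrite step at position `p`. -/
def StepAt (p : Pos) (t t' : Term F V ar) : Prop :=
  ∃ ρ : S.R, StepRedex S ⟨p, ρ⟩ t t'

/-- The pattern of a redex: the positions of the function symbols of its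
left-hand side, placed at its position. -/
def Redex.pattern {S : ITRS F V ar} (u : Redex S) : Set Pos :=
  {p | ∃ q f, p = u.pos ++ q ∧ (S.lhs u.rule).val q = some (Sum.inl f)}

/-- Two redexes overlap if their patterns share a position. -/
def Overlap (u v : Redex S) : Prop := (u.pattern ∩ v.pattern).Nonempty

/-- A multi-redex in `t`: a set of pairwise non-overlapping redex
occurrences of `t`. -/
def IsMultiRedex (t : Term F V ar) (U : Set (Redex S)) : Prop :=
  (∀ u ∈ U, IsRedex S t u) ∧ U.Pairwise fun u v => ¬ Overlap S u v

/-- Left-linearity: no left-hand side contains a repeated variable. -/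
def LeftLinear : Prop :=
  ∀ ρ p q x, (S.lhs ρ).val p = some (Sum.inr x) →
    (S.lhs ρ).val q = some (Sum.inr x) → p = q

/-- Weak orthogonality: left-linear and all critical pairs are trivial;
for left-linear systems the latter is equivalent to the requirement that
contracting either of two overlapping redexes of any term yields the same
result. -/
def WeaklyOrthogonal : Prop :=
  LeftLinear S ∧
  ∀ (t t₁ t₂ : Term F V ar) (u v : Redex S), Overlap S u v →
    StepRedex S u t t₁ → StepRedex S v t t₂ → t₁ = t₂

/-- A rule is collapsing if its right-hand side is a variable. -/
def Collapsing (ρ : S.R) : Prop := ∃ x, (S.rhs ρ).val [] = some (Sum.inr x)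

/-- The system has no collapsing rules. -/
def NonCollapsing : Prop := ∀ ρ, ¬ Collapsing S ρ

/-- The system is a TRS: all right-hand sides are finite terms. -/
def IsTRS : Prop := ∀ ρ, {p : Pos | ((S.rhs ρ).val p).isSome}.Finite

/-- Two terms agree at all positions of depth at most `k`
(equivalently, their distance is at most `2^{-k}`). -/
def AgreeUpTo (k : ℕ) (s t : Term F V ar) : Prop :=
  ∀ p : Pos, p.length ≤ k → s.val p = t.val p

/-- `IsSCRed S α f p s t`: the data `(f, p)` constitutes a strongly convergent
reduction of ordinal length `α` from `s` to `t`: `f β` is the `β`-th term,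
`p β` the position of the `β`-th step, and every limit ordinal `λ ≤ α` is
approached with the terms converging to `f λ` and the depths of the steps
tending to infinity. -/
def IsSCRed (α : Ordinal) (f : Ordinal → Term F V ar) (p : Ordinal → Pos)
    (s t : Term F V ar) : Prop :=
  f 0 = s ∧ f α = t ∧
  (∀ β < α, StepAt S (p β) (f β) (f (β + 1))) ∧
  ∀ l ≤ α, Order.IsSuccLimit l → ∀ k : ℕ, ∃ β < l, ∀ γ, β ≤ γ → γ < l →
    AgreeUpTo k (f γ) (f l) ∧ k ≤ (p γ).length

/-- The infinitary rewriting relation `s ↠∞ t`: there is a strongly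
convergent reduction (of some ordinal length) from `s` to `t`. -/
def IRed (s t : Term F V ar) : Prop :=
  ∃ (α : Ordinal.{0}) (f : Ordinal → Term F V ar) (p : Ordinal → Pos),
    IsSCRed S α f p s t

/-- `IsSContRed S α f p s`: a strongly continuous reduction sequence of
ordinal length `α` starting at `s`: convergence of the terms and depths
tending to infinity are required at every limit ordinal strictly below `α`. -/
def IsSContRed (α : Ordinal) (f : Ordinal → Term F V ar) (p : Ordinal → Pos)
    (s : Term F V ar) : Prop :=
  f 0 = s ∧
  (∀ β < α, StepAt S (p β) (f β) (f (β + 1))) ∧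
  ∀ l < α, Order.IsSuccLimit l → ∀ k : ℕ, ∃ β < l, ∀ γ, β ≤ γ → γ < l →
    AgreeUpTo k (f γ) (f l) ∧ k ≤ (p γ).length

/-- A strongly continuous reduction sequence of length `α` with step
positions `p` is divergent (not strongly convergent) if `α` is a limit
ordinal and the depths of the steps do not tend to infinity when
approaching `α`. -/
def Divergent (α : Ordinal) (p : Ordinal → Pos) : Prop :=
  Order.IsSuccLimit α ∧ ¬ ∀ k : ℕ, ∃ β < α, ∀ γ, β ≤ γ → γ < α → k ≤ (p γ).length

/-- A set of redexes at pairwise disjoint (parallel) positions. -/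
def ParallelSet (U : Set (Redex S)) : Prop :=
  U.Pairwise fun u v => ¬ u.pos <+: v.pos ∧ ¬ v.pos <+: u.pos

/-- The parallel step `t ⊸_U t'`: the simultaneous contraction (complete
development) of a set `U` of redexes of `t` at pairwise disjoint positions. -/
def ParStep (U : Set (Redex S)) (t t' : Term F V ar) : Prop :=
  ParallelSet S U ∧
  (∀ u ∈ U, ∃ σ, MatchesAt (S.lhs u.rule) σ t u.pos ∧
      InstanceAt (S.rhs u.rule) σ t' u.pos) ∧
  ∀ q, (∀ u ∈ U, ¬ u.pos <+: q) → t'.val q = t.val q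

/-- The descendants (residuals) of the position `q` across a rewrite step
with rule `ρ` at position `p`: positions not below `p` descend to themselves,
and positions within the substitution part are relocated according to the
occurrences of the corresponding variable in the right-hand side. -/
def Descendants (ρ : S.R) (p : Pos) (q : Pos) : Set Pos :=
  {q' | (¬ p <+: q ∧ q' = q) ∨
    ∃ q₁ q₂ x, q = p ++ q₁ ++ q₂ ∧ (S.lhs ρ).val q₁ = some (Sum.inr x) ∧
      ∃ q₁', (S.rhs ρ).val q₁' = some (Sum.inr x) ∧ q' = p ++ q₁' ++ q₂}

/-- The overlap relation on the redex occurrences of `t`. -/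
def OverlapIn (t : Term F V ar) (u v : Redex S) : Prop :=
  IsRedex S t u ∧ IsRedex S t v ∧ Overlap S u v

/-- A cluster in `t`: a nonempty connected component of the overlap relation
on the redex occurrences of `t`. -/
def IsCluster (t : Term F V ar) (c : Set (Redex S)) : Prop :=
  c.Nonempty ∧ (∀ u ∈ c, IsRedex S t u) ∧
  (∀ u ∈ c, ∀ v, IsRedex S t v → Overlap S u v → v ∈ c) ∧
  (∀ u ∈ c, ∀ v ∈ c, Relation.ReflTransGen (OverlapIn S t) u v)

/-- The pattern of a cluster: the union of the patterns of its redexes. -/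
def clusterPattern (c : Set (Redex S)) : Set Pos := ⋃ u ∈ c, u.pattern

/-- A `Y`-cluster: a cluster containing two redexes at parallel (disjoint)
positions. -/
def IsYCluster (c : Set (Redex S)) : Prop :=
  ∃ u ∈ c, ∃ v ∈ c, ¬ u.pos <+: v.pos ∧ ¬ v.pos <+: u.pos

/-- A cluster is infinite if the set of roots of its redexes is infinite. -/
def InfiniteCluster (c : Set (Redex S)) : Prop :=
  (Redex.pos '' c).Infinite

/-- A trivial cluster: a `Y`-cluster or an infinite `I`-cluster
(a cluster that is not a `Y`-cluster is an `I`-cluster). -/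
def TrivialCluster (c : Set (Redex S)) : Prop :=
  IsYCluster S c ∨ InfiniteCluster S c

/-- `IsDevelopment S α f rp U s t`: a (complete) development of the
multi-redex `U 0` of `s`: a strongly convergent reduction from `s` to `t` of
length `α`, each of whose steps contracts a member `rp β` of the current set
`U β` of residuals of `U 0`, where residuals are tracked along steps (via the
descendant relation) and along limits, and no residual is left at the end. -/
def IsDevelopment (α : Ordinal) (f : Ordinal → Term F V ar)
    (rp : Ordinal → Redex S) (U : Ordinal → Set (Redex S))
    (s t : Term F V ar) : Prop :=
  f 0 = s ∧ f α = t ∧ U α = ∅ ∧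
  (∀ β < α, rp β ∈ U β ∧ StepRedex S (rp β) (f β) (f (β + 1)) ∧
    U (β + 1) = ⋃ v ∈ U β \ {rp β},
      {w : Redex S | w.rule = v.rule ∧
        w.pos ∈ Descendants S (rp β).rule (rp β).pos v.pos}) ∧
  ∀ l ≤ α, Order.IsSuccLimit l →
    (U l = {u | ∃ β < l, ∀ γ, β ≤ γ → γ < l → u ∈ U γ}) ∧
    ∀ k : ℕ, ∃ β < l, ∀ γ, β ≤ γ → γ < l →
      AgreeUpTo k (f γ) (f l) ∧ k ≤ (rp γ).pos.length

/-- The multi-step `s ⊸_U₀ t`: a complete development of the multi-redex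
`U₀` of `s`. -/
def MultiStep (U₀ : Set (Redex S)) (s t : Term F V ar) : Prop :=
  IsMultiRedex S s U₀ ∧
  ∃ (α : Ordinal.{0}) (f : Ordinal → Term F V ar) (rp : Ordinal → Redex S)
    (U : Ordinal → Set (Redex S)), U 0 = U₀ ∧ IsDevelopment S α f rp U s t

/-- The multi-step rewrite relation `s ⊸ t`. -/
def MStep (s t : Term F V ar) : Prop := ∃ U₀, MultiStep S U₀ s t

end WOInf

namespace WOInf


section Aux
variable {F V : Type} {ar : F → ℕ}

theorem Term.ext' {t t' : Term F V ar} (h : ∀ p, t.val p = t'.val p) : t = t' := by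
  have hv : t.val = t'.val := funext h
  cases t; cases t'; cases hv; rfl

theorem prefix_antisymm {p q : Pos} (h1 : p <+: q) (h2 : q <+: p) : p = q :=
  h1.eq_of_length (le_antisymm h1.length_le h2.length_le)

theorem overlap_symm {S : ITRS F V ar} {u v : Redex S} (h : Overlap S u v) :
    Overlap S v u := by
  obtain ⟨p, hp1, hp2⟩ := h; exact ⟨p, hp2, hp1⟩

theorem overlap_comparable {S : ITRS F V ar} {u v : Redex S} (h : Overlap S u v) :
    u.pos <+: v.pos ∨ v.pos <+: u.pos := by
  obtain ⟨p, ⟨q, f, rfl, _⟩, ⟨q', f', hp, _⟩⟩ := h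
  have h1 : u.pos <+: u.pos ++ q := List.prefix_append _ _
  have h2 : v.pos <+: u.pos ++ q := hp ▸ List.prefix_append _ _
  exact List.prefix_or_prefix_of_prefix h1 h2

theorem lhs_app (S : ITRS F V ar) (ρ : S.R) :
    ∃ f ts, S.lhs ρ = FTerm.app f ts := by
  cases h : S.lhs ρ with
  | var x => exact absurd h (S.lhs_not_var ρ x)
  | app f ts => exact ⟨f, ts, rfl⟩

theorem matchesAt_isSome {S : ITRS F V ar} {ρ : S.R} {σ : V → Term F V ar}
    {s : Term F V ar} {p : Pos} (hm : MatchesAt (S.lhs ρ) σ s p) :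
    (s.val p).isSome := by
  obtain ⟨f, ts, hf⟩ := lhs_app S ρ
  have : (S.lhs ρ).val [] = some (Sum.inl f) := by rw [hf]; rfl
  have := hm.1 [] f this
  rw [List.append_nil] at this
  rw [this]; rfl

theorem instanceAt_isSome {r : Term F V ar} {σ : V → Term F V ar}
    {t : Term F V ar} {p : Pos} (hi : InstanceAt r σ t p) :
    (t.val p).isSome := by
  have hr := r.root_isSome
  cases hz : r.val [] with
  | none => rw [hz] at hr; simp at hr
  | some z =>
    cases z with
    | inl f =>
      have := hi.1 [] f hz
      rw [List.append_nil] at this; rw [this]; rfl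
    | inr x =>
      have := hi.2 [] x hz []
      rw [List.append_nil, List.append_nil] at this
      rw [this]; exact (σ x).root_isSome

theorem instanceAt_congr {r : Term F V ar} {σ : V → Term F V ar}
    {t t' : Term F V ar} {p : Pos} (hi : InstanceAt r σ t p)
    (hag : ∀ q, t'.val (p ++ q) = t.val (p ++ q)) : InstanceAt r σ t' p := by
  constructor
  · intro q f hq; rw [hag q]; exact hi.1 q f hq
  · intro q x hq q'
    rw [List.append_assoc] at *
    rw [hag (q ++ q')]
    have := hi.2 q x hq q'
    rwa [List.append_assoc] at this

/-- Splice the subtree of `T` at `p` into `s` at `p`. -/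
def splice (s T : Term F V ar) (p : Pos) (hs : (s.val p).isSome)
    (hT : (T.val p).isSome) : Term F V ar where
  val q := if p <+: q then T.val q else s.val q
  root_isSome := by
    by_cases h : p <+: ([] : Pos)
    · have hp : p = [] := List.prefix_nil.mp h
      rw [if_pos h]; subst hp; exact hT
    · rw [if_neg h]; exact s.root_isSome
  node := by
    intro q i
    by_cases h1 : p <+: q
    · have h2 : p <+: q ++ [i] := h1.trans (List.prefix_append _ _)
      rw [if_pos h1, if_pos h2]; exact T.node q i
    · by_cases h2 : p <+: q ++ [i]
      · have hpe : p = q ++ [i] := by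
          rcases List.prefix_concat_iff.mp h2 with h | h
          · exact h
          · exact absurd h h1
        rw [if_pos h2, if_neg h1]
        subst hpe
        constructor
        · intro _; exact (s.node q i).mp hs
        · intro _; exact hT
      · rw [if_neg h1, if_neg h2]; exact s.node q i

theorem splice_step {S : ITRS F V ar} {ρ : S.R} {σ : V → Term F V ar}
    {s t' : Term F V ar} {p : Pos}
    (hm : MatchesAt (S.lhs ρ) σ s p) (hi : InstanceAt (S.rhs ρ) σ t' p) :
    StepRedex S ⟨p, ρ⟩ s
      (splice s t' p (matchesAt_isSome hm) (instanceAt_isSome hi)) := by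
  refine ⟨σ, hm, ?_, ?_⟩
  · refine instanceAt_congr hi (fun q => ?_)
    show (if p <+: p ++ q then t'.val (p ++ q) else s.val (p ++ q)) = _
    rw [if_pos (List.prefix_append _ _)]
  · intro q hq
    show (if p <+: q then _ else _) = _
    rw [if_neg hq]

end Aux


/-- Let `φ : s ⊸ t₁` and `ψ : s ⊸ t₂` be parallel steps in a
weakly orthogonal iTRS.  Then the pair `(φ, ψ)` has an orthogonalization:
parallel steps `φ' : s ⊸ t₁` and `ψ' : s ⊸ t₂` with the same sources and
targets, contracting sets of redexes `U'` and `V'` such that `U' ∪ V'` is a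
set of pairwise non-overlapping redexes (a multi-redex). -/
theorem parallel_orthogonalization {F V : Type} {ar : F → ℕ} (S : ITRS F V ar)
    (hwo : WeaklyOrthogonal S) (s t₁ t₂ : Term F V ar)
    (U V : Set (Redex S))
    (hφ : ParStep S U s t₁) (hψ : ParStep S V s t₂) :
    ∃ U' V' : Set (Redex S),
      ParStep S U' s t₁ ∧ ParStep S V' s t₂ ∧
      IsMultiRedex S s (U' ∪ V') := by
  classical
  obtain ⟨hwoL, hwoT⟩ := hwo
  obtain ⟨hUpar, hUstep, hUout⟩ := hφ
  obtain ⟨hVpar, hVstep, hVout⟩ := hψ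
  -- the key consequence of weak orthogonality for overlapping redexes u ∈ U, v ∈ V
  have key : ∀ u ∈ U, ∀ v ∈ V, Overlap S u v → ∀ q : Pos,
      (if u.pos <+: q then t₁.val q else s.val q)
      = (if v.pos <+: q then t₂.val q else s.val q) := by
    intro u hu v hv hov q
    obtain ⟨σu, hmu, hiu⟩ := hUstep u hu
    obtain ⟨σv, hmv, hiv⟩ := hVstep v hv
    have su : StepRedex S u s _ := splice_step hmu hiu
    have sv : StepRedex S v s _ := splice_step hmv hiv
    have e := hwoT s _ _ u v hov su sv
    exact congrArg (fun t => Term.val t q) e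
  have Uinc : ∀ a ∈ U, ∀ b ∈ U, a.pos <+: b.pos → a = b := by
    intro a ha b hb hp
    by_contra hne
    exact (hUpar ha hb hne).1 hp
  have Vinc : ∀ a ∈ V, ∀ b ∈ V, a.pos <+: b.pos → a = b := by
    intro a ha b hb hp
    by_contra hne
    exact (hVpar ha hb hne).1 hp
  set KU : Set (Redex S) :=
    {u | u ∈ U ∧ ∀ v ∈ V, Overlap S u v → v.pos <+: u.pos} with hKU
  set KV : Set (Redex S) :=
    {v | v ∈ V ∧ ∀ u ∈ U, Overlap S u v → ¬ v.pos <+: u.pos} with hKV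
  set RV : Set (Redex S) :=
    {v | v ∈ V ∧ ∃ u ∈ U, Overlap S u v ∧ u.pos <+: v.pos ∧ u.pos ≠ v.pos} with hRV
  set RU : Set (Redex S) :=
    {u | u ∈ U ∧ ∃ v ∈ V, Overlap S u v ∧ v.pos <+: u.pos} with hRU
  have hRVKV : RV ⊆ KV := by
    rintro v ⟨hv, u0, hu0, hov0, hpre0, hne0⟩
    refine ⟨hv, fun u hu hov hvu => ?_⟩
    have heq : u0 = u := Uinc u0 hu0 u hu (hpre0.trans hvu)
    subst heq
    exact hne0 (prefix_antisymm hpre0 hvu)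
  have hRUKU : RU ⊆ KU := by
    rintro u ⟨hu, v0, hv0, hov0, hpre0⟩
    refine ⟨hu, fun v hv hov => ?_⟩
    rcases overlap_comparable hov with h | h
    · have heq : v0 = v := Vinc v0 hv0 v hv (hpre0.trans h)
      subst heq; exact hpre0
    · exact h
  have crossKK : ∀ a ∈ KU, ∀ b ∈ KV, ¬ Overlap S a b := by
    rintro a ⟨ha, hka⟩ b ⟨hb, hkb⟩ hov
    exact hkb a ha hov (hka b hb hov)
  have hpw : (KU ∪ KV).Pairwise fun a b => ¬ Overlap S a b := by
    intro a hha b hhb hne hov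
    rcases hha with ha | ha <;> rcases hhb with hb | hb
    · rcases overlap_comparable hov with h | h
      · exact hne (Uinc a ha.1 b hb.1 h)
      · exact hne (Uinc b hb.1 a ha.1 h).symm
    · exact crossKK a ha b hb hov
    · exact crossKK b hb a ha (overlap_symm hov)
    · rcases overlap_comparable hov with h | h
      · exact hne (Vinc a ha.1 b hb.1 h)
      · exact hne (Vinc b hb.1 a ha.1 h).symm
  have hredU : ∀ u ∈ U, IsRedex S s u := by
    intro u hu; obtain ⟨σ, hm, _⟩ := hUstep u hu; exact ⟨σ, hm⟩
  have hredV : ∀ v ∈ V, IsRedex S s v := by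
    intro v hv; obtain ⟨σ, hm, _⟩ := hVstep v hv; exact ⟨σ, hm⟩
  refine ⟨KU ∪ RV, KV ∪ RU, ⟨?_, ?_, ?_⟩, ⟨?_, ?_, ?_⟩, ?_, ?_⟩
  -- ParallelSet (KU ∪ RV)
  · have main : ∀ a ∈ KU ∪ RV, ∀ b ∈ KU ∪ RV, a.pos <+: b.pos → a = b := by
      rintro a (⟨ha, hka⟩ | ⟨ha, u0, hu0, hov0, hpre0, hne0⟩)
          b (⟨hb, hkb⟩ | ⟨hb, u1, hu1, hov1, hpre1, hne1⟩) hp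
      · exact Uinc a ha b hb hp
      · -- a kept in U, b ∈ RV inner to u1
        exfalso
        have hcomp : a.pos <+: u1.pos ∨ u1.pos <+: a.pos :=
          List.prefix_or_prefix_of_prefix hp hpre1
        have heq : a = u1 := by
          rcases hcomp with h | h
          · exact Uinc a ha u1 hu1 h
          · exact (Uinc u1 hu1 a ha h).symm
        subst heq
        exact hne1 (prefix_antisymm hpre1 (hka b hb hov1))
      · -- a ∈ RV inner to u0, b kept in U
        exfalso
        have heq : u0 = b := Uinc u0 hu0 b hb (hpre0.trans hp)
        subst heq
        exact hne0 (prefix_antisymm hpre0 (hkb a ha hov0))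
      · exact Vinc a ha b hb hp
    intro a ha b hb hne
    exact ⟨fun h => hne (main a ha b hb h), fun h => hne (main b hb a ha h).symm⟩
  -- steps for KU ∪ RV into t₁
  · rintro w (⟨hwU, hk⟩ | ⟨hwV, u0, hu0, hov, hpre, hne⟩)
    · exact hUstep w hwU
    · obtain ⟨σ, hm, hi⟩ := hVstep w hwV
      refine ⟨σ, hm, instanceAt_congr hi (fun q => ?_)⟩
      have hq1 : u0.pos <+: w.pos ++ q := hpre.trans (List.prefix_append _ _)
      have hq2 : w.pos <+: w.pos ++ q := List.prefix_append _ _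
      have hkey := key u0 hu0 w hwV hov (w.pos ++ q)
      rw [if_pos hq1, if_pos hq2] at hkey
      exact hkey
  -- outside condition for KU ∪ RV
  · intro q hq
    by_cases h : ∃ u ∈ U, u.pos <+: q
    · obtain ⟨u, hu, hpre⟩ := h
      by_cases hk : ∀ v ∈ V, Overlap S u v → v.pos <+: u.pos
      · exact absurd hpre (hq u (Or.inl ⟨hu, hk⟩))
      · push_neg at hk
        obtain ⟨v, hv, hov, hnvu⟩ := hk
        have huv : u.pos <+: v.pos := (overlap_comparable hov).resolve_right hnvu
        have hne : u.pos ≠ v.pos := fun h => hnvu (h ▸ List.prefix_refl _)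
        have hnvq : ¬ v.pos <+: q := hq v (Or.inr ⟨hv, u, hu, hov, huv, hne⟩)
        have hkey := key u hu v hv hov q
        rw [if_pos hpre, if_neg hnvq] at hkey
        exact hkey
    · push_neg at h
      exact hUout q h
  -- ParallelSet (KV ∪ RU)
  · have main : ∀ a ∈ KV ∪ RU, ∀ b ∈ KV ∪ RU, a.pos <+: b.pos → a = b := by
      rintro a (⟨ha, hka⟩ | ⟨ha, v0, hv0, hov0, hpre0⟩)
          b (⟨hb, hkb⟩ | ⟨hb, v1, hv1, hov1, hpre1⟩) hp
      · exact Vinc a ha b hb hp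
      · -- a kept in V, b ∈ RU with outer v1
        exfalso
        have hcomp : a.pos <+: v1.pos ∨ v1.pos <+: a.pos :=
          List.prefix_or_prefix_of_prefix hp hpre1
        have heq : a = v1 := by
          rcases hcomp with h | h
          · exact Vinc a ha v1 hv1 h
          · exact (Vinc v1 hv1 a ha h).symm
        subst heq
        exact hka b hb hov1 hp
      · -- a ∈ RU with outer v0, b kept in V
        exfalso
        have heq : v0 = b := Vinc v0 hv0 b hb (hpre0.trans hp)
        subst heq
        exact hkb a ha hov0 hpre0
      · exact Uinc a ha b hb hp
    intro a ha b hb hne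
    exact ⟨fun h => hne (main a ha b hb h), fun h => hne (main b hb a ha h).symm⟩
  -- steps for KV ∪ RU into t₂
  · rintro w (⟨hwV, hk⟩ | ⟨hwU, v0, hv0, hov, hpre⟩)
    · exact hVstep w hwV
    · obtain ⟨σ, hm, hi⟩ := hUstep w hwU
      refine ⟨σ, hm, instanceAt_congr hi (fun q => ?_)⟩
      have hq1 : w.pos <+: w.pos ++ q := List.prefix_append _ _
      have hq2 : v0.pos <+: w.pos ++ q := hpre.trans (List.prefix_append _ _)
      have hkey := key w hwU v0 hv0 hov (w.pos ++ q)
      rw [if_pos hq1, if_pos hq2] at hkey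
      exact hkey.symm
  -- outside condition for KV ∪ RU
  · intro q hq
    by_cases h : ∃ v ∈ V, v.pos <+: q
    · obtain ⟨v, hv, hpre⟩ := h
      by_cases hk : ∀ u ∈ U, Overlap S u v → ¬ v.pos <+: u.pos
      · exact absurd hpre (hq v (Or.inl ⟨hv, hk⟩))
      · push_neg at hk
        obtain ⟨u, hu, hov, hvu⟩ := hk
        have hnuq : ¬ u.pos <+: q := hq u (Or.inr ⟨hu, v, hv, hov, hvu⟩)
        have hkey := key u hu v hv hov q
        rw [if_neg hnuq, if_pos hpre] at hkey
        exact hkey.symm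
    · push_neg at h
      exact hVout q h
  -- all elements are redexes of s
  · rintro w ((⟨hw, -⟩ | ⟨hw, -⟩) | (⟨hw, -⟩ | ⟨hw, -⟩))
    · exact hredU w hw
    · exact hredV w hw
    · exact hredV w hw
    · exact hredU w hw
  -- pairwise non-overlapping
  · refine Set.Pairwise.mono ?_ hpw
    rintro w ((hw | hw) | (hw | hw))
    · exact Or.inl hw
    · exact Or.inr (hRVKV hw)
    · exact Or.inr hw
    · exact Or.inl (hRUKU hw)

end WOInf
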